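/- Let κ > 0 and set a₁ = 2κ², a₂ = −κ⁴ (so that a₁² + 4a₂ = 0). Let W = so(4) × (ℝ³ × ℝ³) with the bracket [(A₁,(z₁,y₁)),(A₂,(z₂,y₂))] = (A₁A₂ − A₂A₁, θ(A₁)(z₂,y₂) − θ(A₂)(z₁,y₁)), where for the element A of so(4) with block form (★⁻¹w, x; −xᵀ, 0) one defines θ(A)(z,y) = (w×z − x×y, w×y − x×z). Then the linear map φ : 𝔤(a₁,a₂) → W given by φ(x,y,z,w) = ((★⁻¹(w + κ²y), −κx − κ³z; (κx + κ³z)ᵀ, 0), ((3/2)κ³·z + (κ/2)·x, κ²·y)) is bijective and satisfies φ([u,v]) = [φ(u), φ(v)] for all u, v. In particular 𝔤(2κ², −κ⁴) is isomorphic to the semidirect product so(4) ⋉_θ (ℝ³ × ℝ³). -/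

import Mathlib

open Matrix

/-- The cross product on `ℝ³`. -/
def cross (x y : Fin 3 → ℝ) : Fin 3 → ℝ :=
  ![x 1 * y 2 - x 2 * y 1, x 2 * y 0 - x 0 * y 2, x 0 * y 1 - x 1 * y 0]

abbrev V3 := Fin 3 → ℝ

/-- The underlying space `ℝ³ × ℝ³ × ℝ³ × ℝ³` of `𝔤(a₁, a₂)`. -/
abbrev G4 := V3 × V3 × V3 × V3

/-- The bracket of `𝔤(a₁, a₂)`, the Lie algebra of the isometry group of the
sub-Riemannian model space `𝖢₃,₃(a₁,a₂)`. -/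
def gBracket (a₁ a₂ : ℝ) (u v : G4) : G4 :=
  let x₁ := u.1; let y₁ := u.2.1; let z₁ := u.2.2.1; let w₁ := u.2.2.2
  let x₂ := v.1; let y₂ := v.2.1; let z₂ := v.2.2.1; let w₂ := v.2.2.2
  ( cross w₁ x₂ + cross x₁ w₂ + a₂ • (cross y₁ z₂ + cross z₁ y₂),
    cross w₁ y₂ + cross y₁ w₂ + cross x₁ x₂
      + a₁ • (cross x₁ z₂ + cross z₁ x₂ + cross y₁ y₂ + a₁ • cross z₁ z₂)
      + a₂ • cross z₁ z₂,
    cross w₁ z₂ + cross z₁ w₂ + cross x₁ y₂ + cross y₁ x₂ + a₁ • (cross y₁ z₂ + cross z₁ y₂),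
    cross w₁ w₂ + a₂ • (cross x₁ z₂ + cross z₁ x₂ + cross y₁ y₂ + a₁ • cross z₁ z₂) )

/-- The hat map `★⁻¹ : ℝ³ → so(3)`, with `(★⁻¹ v) u = v × u`. -/
def hat (v : V3) : Matrix (Fin 3) (Fin 3) ℝ :=
  Matrix.of ![![0, -v 2, v 1], ![v 2, 0, -v 0], ![-v 1, v 0, 0]]

/-- The space of 4×4 real matrices paired with `ℝ³ × ℝ³`; the first factor contains
`so(4)` as the skew-symmetric matrices. -/
abbrev W12 := Matrix (Fin 3 ⊕ Fin 1) (Fin 3 ⊕ Fin 1) ℝ × (V3 × V3)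

/-- The action `θ` of `so(4)` on `ℝ³ × ℝ³`: for `A` with block form `(★⁻¹w, x; −xᵀ, 0)`,
`θ(A)(z,y) = (w×z − x×y, w×y − x×z)`. -/
def theta (A : Matrix (Fin 3 ⊕ Fin 1) (Fin 3 ⊕ Fin 1) ℝ) (p : V3 × V3) : V3 × V3 :=
  let w : V3 := ![A (Sum.inl 2) (Sum.inl 1), A (Sum.inl 0) (Sum.inl 2), A (Sum.inl 1) (Sum.inl 0)]
  let x : V3 := fun i => A (Sum.inl i) (Sum.inr 0)
  (cross w p.1 - cross x p.2, cross w p.2 - cross x p.1)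

/-- The semidirect-product bracket on `so(4) ⋉_θ (ℝ³ × ℝ³)`:
`[(A₁,p₁),(A₂,p₂)] = (A₁A₂ − A₂A₁, θ(A₁)p₂ − θ(A₂)p₁)`. -/
def wBracket (P Q : W12) : W12 :=
  (P.1 * Q.1 - Q.1 * P.1, theta P.1 Q.2 - theta Q.1 P.2)

/-- The map `φ : 𝔤(2κ², −κ⁴) → so(4) ⋉_θ (ℝ³ × ℝ³)`. -/
noncomputable def phi12 (κ : ℝ) (u : G4) : W12 :=
  ( Matrix.fromBlocks (hat (u.2.2.2 + κ ^ 2 • u.2.1))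
      (Matrix.of fun i _ => -(κ • u.1 + κ ^ 3 • u.2.2.1) i)
      (Matrix.of fun _ j => (κ • u.1 + κ ^ 3 • u.2.2.1) j) 0,
    ((3 / 2 * κ ^ 3) • u.2.2.1 + (κ / 2) • u.1, κ ^ 2 • u.2.1) )

/-!
Write `so4Block w x` for the skew matrix `(★⁻¹w, x; −xᵀ, 0)`. Its commutators are
`[so4Block w x, so4Block w' x'] = so4Block (w × w' + x × x') (w × x' + x × w')`, and `θ` is given
by cross products as well, so both sides of `φ [u, v] = [φ u, φ v]` are bilinear combinations of
cross products of components of `u` and `v`; once anticommutativity puts every product in the order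
(component of `u`) × (component of `v`), the coefficients agree for `a₁ = 2κ²`, `a₂ = −κ⁴`.
`φ` is bijective onto the skew matrices because every skew matrix is some `so4Block w x` and,
for `κ ≠ 0`, the linear system `φ u = (so4Block w x, p, q)` has a unique solution.
-/

theorem cross_eq_crossProduct (x y : V3) : cross x y = x ⨯₃ y := by
  rw [cross_apply]
  rfl

def so4Block (w x : V3) : Matrix (Fin 3 ⊕ Fin 1) (Fin 3 ⊕ Fin 1) ℝ :=
  fromBlocks (hat w) (of fun i _ => x i) (of fun _ j => -x j) 0

def so4Rot (A : Matrix (Fin 3 ⊕ Fin 1) (Fin 3 ⊕ Fin 1) ℝ) : V3 :=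
  ![A (Sum.inl 2) (Sum.inl 1), A (Sum.inl 0) (Sum.inl 2), A (Sum.inl 1) (Sum.inl 0)]

def so4Col (A : Matrix (Fin 3 ⊕ Fin 1) (Fin 3 ⊕ Fin 1) ℝ) : V3 :=
  fun i => A (Sum.inl i) (Sum.inr 0)

@[simp]
theorem so4Rot_so4Block (w x : V3) : so4Rot (so4Block w x) = w := by
  ext i
  fin_cases i <;> simp [so4Rot, so4Block, hat]

@[simp]
theorem so4Col_so4Block (w x : V3) : so4Col (so4Block w x) = x := by
  ext i
  simp [so4Col, so4Block]

theorem so4Block_transpose (w x : V3) : (so4Block w x)ᵀ = -so4Block w x := by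
  ext (i | i) (j | j) <;> fin_cases i <;> fin_cases j <;> simp [so4Block, hat]

theorem so4Block_so4Rot_so4Col {A : Matrix (Fin 3 ⊕ Fin 1) (Fin 3 ⊕ Fin 1) ℝ} (hA : Aᵀ = -A) :
    so4Block (so4Rot A) (so4Col A) = A := by
  have skew : ∀ i j, A j i = -A i j := fun i j => by simpa using congrFun (congrFun hA i) j
  ext (i | i) (j | j) <;> fin_cases i <;> fin_cases j <;>
    simp [so4Block, so4Rot, so4Col, hat] <;>
    linarith [skew (.inl 0) (.inl 0), skew (.inl 1) (.inl 1), skew (.inl 2) (.inl 2),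
      skew (.inl 0) (.inl 1), skew (.inl 0) (.inl 2), skew (.inl 1) (.inl 2),
      skew (.inl 0) (.inr 0), skew (.inl 1) (.inr 0), skew (.inl 2) (.inr 0),
      skew (.inr 0) (.inr 0)]

theorem so4Block_mul_sub_mul (w x w' x' : V3) :
    so4Block w x * so4Block w' x' - so4Block w' x' * so4Block w x =
      so4Block (w ⨯₃ w' + x ⨯₃ x') (w ⨯₃ x' + x ⨯₃ w') := by
  ext (i | i) (j | j) <;> fin_cases i <;> fin_cases j <;>
    simp [so4Block, hat, mul_apply, Fintype.sum_sum_type, Fin.sum_univ_three, cross_apply] <;>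
    ring

theorem theta_eq_crossProduct (A : Matrix (Fin 3 ⊕ Fin 1) (Fin 3 ⊕ Fin 1) ℝ) (p : V3 × V3) :
    theta A p = (so4Rot A ⨯₃ p.1 - so4Col A ⨯₃ p.2, so4Rot A ⨯₃ p.2 - so4Col A ⨯₃ p.1) := by
  simp only [theta, cross_eq_crossProduct]
  rfl

theorem theta_so4Block (w x p q : V3) :
    theta (so4Block w x) (p, q) = (w ⨯₃ p - x ⨯₃ q, w ⨯₃ q - x ⨯₃ p) := by
  simp [theta_eq_crossProduct]

theorem wBracket_so4Block (w x p q w' x' p' q' : V3) :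
    wBracket (so4Block w x, p, q) (so4Block w' x', p', q') =
      (so4Block (w ⨯₃ w' + x ⨯₃ x') (w ⨯₃ x' + x ⨯₃ w'),
        w ⨯₃ p' - x ⨯₃ q' + p ⨯₃ w' - q ⨯₃ x', w ⨯₃ q' - x ⨯₃ p' + q ⨯₃ w' - p ⨯₃ x') := by
  simp only [wBracket, so4Block_mul_sub_mul, theta_so4Block, Prod.mk_sub_mk, Prod.mk.injEq,
    true_and]
  constructor <;> rw [← cross_anticomm w', ← cross_anticomm x'] <;> abel

theorem phi12_mk (κ : ℝ) (x y z w : V3) :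
    phi12 κ (x, y, z, w) = (so4Block (w + κ ^ 2 • y) (-(κ • x + κ ^ 3 • z)),
      (3 / 2 * κ ^ 3) • z + (κ / 2) • x, κ ^ 2 • y) := by
  simp only [phi12, so4Block, neg_neg, Pi.neg_apply]

theorem phi12_gBracket (κ : ℝ) (u v : G4) :
    phi12 κ (gBracket (2 * κ ^ 2) (-κ ^ 4) u v) = wBracket (phi12 κ u) (phi12 κ v) := by
  obtain ⟨x₁, y₁, z₁, w₁⟩ := u
  obtain ⟨x₂, y₂, z₂, w₂⟩ := v
  simp only [gBracket, cross_eq_crossProduct, phi12_mk, wBracket_so4Block, map_add, map_smul,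
    map_neg, LinearMap.add_apply, LinearMap.smul_apply, LinearMap.neg_apply]
  refine Prod.ext (congrArg₂ so4Block ?_ ?_) (Prod.ext ?_ ?_) <;> module

noncomputable def phi12Inv (κ : ℝ) (P : W12) : G4 :=
  ( -κ⁻¹ • ((3 / 2 : ℝ) • so4Col P.1 + P.2.1), (κ ^ 2)⁻¹ • P.2.2,
    (κ ^ 3)⁻¹ • (P.2.1 + (1 / 2 : ℝ) • so4Col P.1), so4Rot P.1 - P.2.2 )

theorem phi12Inv_phi12 {κ : ℝ} (hκ : κ ≠ 0) (u : G4) : phi12Inv κ (phi12 κ u) = u := by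
  obtain ⟨x, y, z, w⟩ := u
  simp only [phi12Inv, phi12_mk, so4Rot_so4Block, so4Col_so4Block, Prod.mk.injEq]
  refine ⟨?_, ?_, ?_, ?_⟩ <;> match_scalars <;> field_simp <;> ring

theorem phi12_phi12Inv_so4Block {κ : ℝ} (hκ : κ ≠ 0) (w x p q : V3) :
    phi12 κ (phi12Inv κ (so4Block w x, p, q)) = (so4Block w x, p, q) := by
  simp only [phi12Inv, phi12_mk, so4Rot_so4Block, so4Col_so4Block, Prod.mk.injEq]
  refine ⟨congrArg₂ so4Block ?_ ?_, ?_, ?_⟩ <;> match_scalars <;> field_simp <;> ring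

theorem phi12_phi12Inv {κ : ℝ} (hκ : κ ≠ 0) {P : W12} (hP : P.1ᵀ = -P.1) :
    phi12 κ (phi12Inv κ P) = P := by
  obtain ⟨A, p, q⟩ := P
  rw [← so4Block_so4Rot_so4Col (A := A) hP]
  exact phi12_phi12Inv_so4Block hκ _ _ p q

/-- For `κ > 0`, `φ` is a bijection from `𝔤(2κ², −κ⁴)` onto `so(4) × (ℝ³ × ℝ³)` sending the
bracket of `𝔤(2κ², −κ⁴)` to the semidirect-product bracket: `𝔤(2κ², −κ⁴)` is isomorphic to
`so(4) ⋉_θ (ℝ³ × ℝ³)`. -/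
theorem stmt_12 (κ : ℝ) (hκ : 0 < κ) :
    Set.BijOn (phi12 κ) Set.univ {P : W12 | P.1ᵀ = -P.1}
    ∧ ∀ u v : G4,
        phi12 κ (gBracket (2 * κ ^ 2) (-κ ^ 4) u v) = wBracket (phi12 κ u) (phi12 κ v) := by
  have hκ₀ : κ ≠ 0 := hκ.ne'
  have maps_to : Set.MapsTo (phi12 κ) Set.univ {P : W12 | P.1ᵀ = -P.1} := fun u _ => by
    obtain ⟨x, y, z, w⟩ := u
    rw [Set.mem_ofPred_eq, phi12_mk, so4Block_transpose]
  have inv_on : Set.InvOn (phi12Inv κ) (phi12 κ) Set.univ {P : W12 | P.1ᵀ = -P.1} :=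
    ⟨fun u _ => phi12Inv_phi12 hκ₀ u, fun _ hP => phi12_phi12Inv hκ₀ hP⟩
  exact ⟨inv_on.bijOn maps_to (Set.mapsTo_univ _ _), phi12_gBracket κ⟩
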